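/- arXiv:1712.08672 — 2 statements merged into one kernel-verified Lean document; each statement's English description precedes it below -/
import Mathlib

section
/- Let V_T ∈ ℕ be even and positive and let T ∈ ℕ with V_T ≤ T. For every causal policy π in the two-link adversarial network model over horizon T, there exists a network-event sequence ω such that: (i) some feasible action sequence (a*, b*) for ω has total utility Σ_{t=0}^{T−1}(a*₁(t) + a*₂(t)) = 2·V_T, final queues Q*₁(T) = Q*₂(T) = 0, and peak total queue length max_{0 ≤ t ≤ T} (Q*₁(t) + Q*₂(t)) ≤ V_T (so ω is V_T-constrained), while every feasible action sequence for ω has total utility at most 2·V_T; and (ii) letting (a^π, b^π, Q^π) be the actions and queues produced by π on ω, (2·V_T − Σ_{t=0}^{T−1}(a₁^π(t) + a₂^π(t))) + Q₁^π(T) + Q₂^π(T) ≥ V_T/2. -/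
open Finset

/-- A network-event sequence in the two-link adversarial model: each slot `t` has
nonnegative arrival capacities `A i t` and channel rates `S i t` for links `i = 0, 1`. -/
structure EventSeq where
  A : Fin 2 → ℕ → ℝ
  S : Fin 2 → ℕ → ℝ
  hA : ∀ i t, 0 ≤ A i t
  hS : ∀ i t, 0 ≤ S i t

/-- An action sequence: admissions `a i t` and services `b i t` for each link and slot. -/
structure ActionSeq where
  a : Fin 2 → ℕ → ℝ
  b : Fin 2 → ℕ → ℝ

/-- Feasibility of an action sequence for an event sequence over horizon `T`:
admissions respect arrival capacities, services respect channel rates, and at most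
one link is served in each slot. -/
def Feasible (T : ℕ) (ω : EventSeq) (α : ActionSeq) : Prop :=
  ∀ t < T, (∀ i, 0 ≤ α.a i t ∧ α.a i t ≤ ω.A i t ∧ 0 ≤ α.b i t ∧ α.b i t ≤ ω.S i t) ∧
    (α.b 0 t = 0 ∨ α.b 1 t = 0)

/-- Queue lengths generated by an action sequence: `Q i 0 = 0` and
`Q i (t+1) = max (Q i t + a i t − b i t) 0`. -/
def queue (α : ActionSeq) (i : Fin 2) : ℕ → ℝ
  | 0 => 0
  | t + 1 => max (queue α i t + α.a i t - α.b i t) 0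

/-- A policy is causal if whenever two event sequences agree on slots `0, …, t`,
the assigned actions agree on slot `t`. -/
def Causal (π : EventSeq → ActionSeq) : Prop :=
  ∀ ω ω' : EventSeq, ∀ t : ℕ,
    (∀ s ≤ t, ∀ i, ω.A i s = ω'.A i s ∧ ω.S i s = ω'.S i s) →
    ∀ i, (π ω).a i t = (π ω').a i t ∧ (π ω).b i t = (π ω').b i t

noncomputable def myEv (V : ℝ) (hV : 0 ≤ V) (j : Fin 2) : EventSeq where
  A := fun _ t => if t = 0 then V else 0
  S := fun i t => if t = 0 ∨ (t = 1 ∧ i = j) then V else 0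
  hA := by intro i t; split <;> simp [hV]
  hS := by intro i t; split <;> simp [hV]

noncomputable def myOpt (V : ℝ) (j k : Fin 2) : ActionSeq where
  a := fun _ t => if t = 0 then V else 0
  b := fun i t => if (t = 0 ∧ i = k) ∨ (t = 1 ∧ i = j) then V else 0

lemma queue_nonneg (α : ActionSeq) (i : Fin 2) (n : ℕ) : 0 ≤ queue α i n := by
  cases n with
  | zero => simp [queue]
  | succ t => simp [queue]

lemma queue_ge_sum (α : ActionSeq) (i : Fin 2) (n : ℕ) :
    (∑ t ∈ range n, (α.a i t - α.b i t)) ≤ queue α i n := by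
  induction n with
  | zero => simp [queue]
  | succ n ih =>
      rw [Finset.sum_range_succ, queue]
      have := le_max_left (queue α i n + α.a i n - α.b i n) 0
      linarith

lemma queue_opt_k (V : ℝ) (j k : Fin 2) (hjk : j ≠ k) (t : ℕ) :
    queue (myOpt V j k) k t = 0 := by
  induction t with
  | zero => rfl
  | succ t ih =>
      have hkj : ¬ (k = j) := fun h => hjk h.symm
      rw [queue, ih, myOpt]
      dsimp
      split_ifs <;> simp_all

lemma queue_opt_j (V : ℝ) (hV : 0 ≤ V) (j k : Fin 2) (hjk : j ≠ k) (t : ℕ) :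
    queue (myOpt V j k) j t = if t = 1 then V else 0 := by
  have hjk' : ¬ (j = k) := hjk
  induction t with
  | zero => rfl
  | succ t ih =>
      rw [queue, ih, myOpt]
      dsimp
      match t with
      | 0 => simp [hjk', hV]
      | 1 => simp [hjk', hV]
      | (n+2) => simp

lemma opt_feasible (V : ℝ) (hV : 0 ≤ V) (T : ℕ) (j k : Fin 2) (hjk : j ≠ k) :
    Feasible T (myEv V hV j) (myOpt V j k) := by
  intro t ht
  constructor
  · intro i
    refine ⟨?_, ?_, ?_, ?_⟩ <;>
    · simp only [myOpt, myEv]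
      split_ifs <;> simp_all
  · rcases t with _|_|t <;> fin_cases j <;> fin_cases k <;> simp_all [myOpt]

lemma opt_sum (V : ℝ) (T : ℕ) (hT : 0 < T) (j k : Fin 2) :
    (∑ t ∈ range T, ((myOpt V j k).a 0 t + (myOpt V j k).a 1 t)) = 2 * V := by
  simp only [myOpt]
  have hcg : ∀ t ∈ range T,
      ((if t = 0 then V else 0) + (if t = 0 then V else 0)) = (if t = 0 then 2*V else 0) := by
    intro t _; split_ifs <;> ring
  rw [Finset.sum_congr rfl hcg]
  rw [Finset.sum_ite_eq' (range T) 0 (fun _ => 2*V)]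
  simp [Finset.mem_range.mpr hT]

lemma feas_upper (V : ℝ) (hV : 0 ≤ V) (T : ℕ) (hT : 0 < T) (j : Fin 2) (α : ActionSeq)
    (h : Feasible T (myEv V hV j) α) :
    (∑ t ∈ range T, (α.a 0 t + α.a 1 t)) ≤ 2 * V := by
  have hle : ∀ t ∈ range T, α.a 0 t + α.a 1 t ≤ (if t = 0 then 2*V else 0) := by
    intro t ht
    rw [Finset.mem_range] at ht
    have h0 := ((h t ht).1 0).2.1
    have h1 := ((h t ht).1 1).2.1
    simp only [myEv] at h0 h1
    split_ifs at h0 h1 ⊢ <;> linarith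
  calc (∑ t ∈ range T, (α.a 0 t + α.a 1 t)) ≤ ∑ t ∈ range T, (if t = 0 then 2*V else 0) :=
        Finset.sum_le_sum hle
    _ = 2 * V := by
        rw [Finset.sum_ite_eq' (range T) 0 (fun _ => 2*V)]
        simp [Finset.mem_range.mpr hT]

lemma regret_bound (V : ℝ) (hV : 0 ≤ V) (T : ℕ) (hT : 0 < T) (j k : Fin 2) (hjk : j ≠ k)
    (α : ActionSeq) (h : Feasible T (myEv V hV j) α) (hbk : α.b k 0 = 0) :
    V ≤ (2 * V - ∑ t ∈ range T, (α.a 0 t + α.a 1 t))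
        + queue α 0 T + queue α 1 T := by
  -- b k t = 0 for all t < T
  have hbk' : ∀ t < T, α.b k t = 0 := by
    intro t ht
    match t with
    | 0 => exact hbk
    | (n+1) =>
        have h1 := ((h (n+1) ht).1 k).2.2.1
        have h2 := ((h (n+1) ht).1 k).2.2.2
        have hkj : ¬ (k = j) := fun hh => hjk hh.symm
        simp only [myEv] at h2
        have hnc : ¬(n + 1 = 0 ∨ (n + 1 = 1 ∧ k = j)) := by
          rintro (hh | hh)
          · omega
          · exact hkj hh.2
        rw [if_neg hnc] at h2
        linarith
  have hQk : (∑ t ∈ range T, α.a k t) ≤ queue α k T := by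
    have := queue_ge_sum α k T
    calc (∑ t ∈ range T, α.a k t) = ∑ t ∈ range T, (α.a k t - α.b k t) := by
          apply Finset.sum_congr rfl
          intro t ht
          rw [hbk' t (Finset.mem_range.mp ht)]
          ring
      _ ≤ queue α k T := this
  have haj : (∑ t ∈ range T, α.a j t) ≤ V := by
    have hle : ∀ t ∈ range T, α.a j t ≤ (if t = 0 then V else 0) := by
      intro t ht
      have := ((h t (Finset.mem_range.mp ht)).1 j).2.1
      simpa [myEv] using this
    calc (∑ t ∈ range T, α.a j t) ≤ ∑ t ∈ range T, (if t = 0 then V else 0) :=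
          Finset.sum_le_sum hle
      _ = V := by
          rw [Finset.sum_ite_eq' (range T) 0 (fun _ => V)]
          simp [Finset.mem_range.mpr hT]
  have hsplit : (∑ t ∈ range T, (α.a 0 t + α.a 1 t))
      = (∑ t ∈ range T, α.a j t) + (∑ t ∈ range T, α.a k t) := by
    rw [Finset.sum_add_distrib]
    fin_cases j <;> fin_cases k <;> simp_all [add_comm]
  have hQj := queue_nonneg α j T
  have hQ0 := queue_nonneg α 0 T
  have hQ1 := queue_nonneg α 1 T
  have hQk' : (∑ t ∈ range T, α.a k t) ≤ queue α 0 T + queue α 1 T := by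
    have hcase : queue α k T = queue α 0 T ∨ queue α k T = queue α 1 T := by
      fin_cases k <;> simp
    rcases hcase with hc | hc <;> linarith
  linarith [hsplit, haj, hQk']

/-- Lower bound under the `V_T`-constrained adversary model (Theorem `thm:lower-general`):
for every causal policy in the two-link adversarial model with throughput utility,
there is a `V_T`-constrained event sequence (witnessed by a utility-optimal feasible
action sequence with total utility `2·V_T`, empty final queues, and peak total queue
length at most `V_T`) on which the sum of the policy's utility regret and final total
queue length is at least `V_T/2`. -/
theorem lower_bound_VT_constrained (VT : ℕ) (hVT : 0 < VT) (hVTeven : Even VT)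
    (T : ℕ) (hVTT : VT ≤ T)
    (π : EventSeq → ActionSeq)
    (hfeas : ∀ ω, Feasible T ω (π ω)) (hcausal : Causal π) :
    ∃ ω : EventSeq,
      ((∃ α, Feasible T ω α ∧
          (∑ t ∈ Finset.range T, (α.a 0 t + α.a 1 t)) = 2 * (VT : ℝ) ∧
          queue α 0 T = 0 ∧ queue α 1 T = 0 ∧
          (∀ t ≤ T, queue α 0 t + queue α 1 t ≤ (VT : ℝ))) ∧
        (∀ α, Feasible T ω α →
          (∑ t ∈ Finset.range T, (α.a 0 t + α.a 1 t)) ≤ 2 * (VT : ℝ))) ∧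
      ((2 * (VT : ℝ) - ∑ t ∈ Finset.range T, ((π ω).a 0 t + (π ω).a 1 t))
          + queue (π ω) 0 T + queue (π ω) 1 T ≥ (VT : ℝ) / 2) := by
  have hV : (0:ℝ) < (VT : ℝ) := by exact_mod_cast hVT
  have hVT2 : 2 ≤ VT := by obtain ⟨r, hr⟩ := hVTeven; omega
  have hT2 : 2 ≤ T := le_trans hVT2 hVTT
  have hT0 : 0 < T := by omega
  have hT1 : T ≠ 1 := by omega
  have key : ∀ (j k : Fin 2), j ≠ k →
      ((∃ α, Feasible T (myEv (VT:ℝ) hV.le j) α ∧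
          (∑ t ∈ Finset.range T, (α.a 0 t + α.a 1 t)) = 2 * (VT : ℝ) ∧
          queue α 0 T = 0 ∧ queue α 1 T = 0 ∧
          (∀ t ≤ T, queue α 0 t + queue α 1 t ≤ (VT : ℝ))) ∧
        (∀ α, Feasible T (myEv (VT:ℝ) hV.le j) α →
          (∑ t ∈ Finset.range T, (α.a 0 t + α.a 1 t)) ≤ 2 * (VT : ℝ))) := by
    intro j k hjk
    have hq : ∀ i : Fin 2, ∀ t, queue (myOpt (VT:ℝ) j k) i t
        = if t = 1 ∧ i = j then (VT:ℝ) else 0 := by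
      intro i t
      have : i = j ∨ i = k := by fin_cases i <;> fin_cases j <;> fin_cases k <;> simp_all
      rcases this with rfl | rfl
      · rw [queue_opt_j (VT:ℝ) hV.le i k hjk]; split_ifs <;> simp_all
      · rw [queue_opt_k (VT:ℝ) j i hjk]
        have : ¬ (i = j) := fun h => hjk h.symm
        split_ifs <;> simp_all
    refine ⟨⟨myOpt (VT:ℝ) j k, opt_feasible (VT:ℝ) hV.le T j k hjk,
        opt_sum (VT:ℝ) T hT0 j k, ?_, ?_, ?_⟩,
      fun α hα => feas_upper (VT:ℝ) hV.le T hT0 j α hα⟩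
    · rw [hq 0 T]; split_ifs <;> simp_all
    · rw [hq 1 T]; split_ifs <;> simp_all
    · intro t ht
      rw [hq 0 t, hq 1 t]
      have hj01 : j = 0 ∨ j = 1 := by fin_cases j <;> simp
      split_ifs with h1 h2 h2 <;> try linarith
      · exact absurd (h1.2.trans h2.2.symm) (by decide)
  have hagree : ∀ s ≤ 0, ∀ i, (myEv (VT:ℝ) hV.le 0).A i s = (myEv (VT:ℝ) hV.le 1).A i s ∧
      (myEv (VT:ℝ) hV.le 0).S i s = (myEv (VT:ℝ) hV.le 1).S i s := by
    intro s hs i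
    interval_cases s
    simp [myEv]
  by_cases hb : (π (myEv (VT:ℝ) hV.le 0)).b 1 0 = 0
  · refine ⟨myEv (VT:ℝ) hV.le 0, key 0 1 (by decide), ?_⟩
    have := regret_bound (VT:ℝ) hV.le T hT0 0 1 (by decide)
      (π (myEv (VT:ℝ) hV.le 0)) (hfeas _) hb
    linarith
  · have hb0 : (π (myEv (VT:ℝ) hV.le 0)).b 0 0 = 0 :=
      ((hfeas (myEv (VT:ℝ) hV.le 0) 0 hT0).2).resolve_right hb
    have hb0' : (π (myEv (VT:ℝ) hV.le 1)).b 0 0 = 0 := by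
      rw [← (hcausal (myEv (VT:ℝ) hV.le 0) (myEv (VT:ℝ) hV.le 1) 0 hagree 0).2]
      exact hb0
    refine ⟨myEv (VT:ℝ) hV.le 1, key 1 0 (by decide), ?_⟩
    have := regret_bound (VT:ℝ) hV.le T hT0 1 0 (by decide)
      (π (myEv (VT:ℝ) hV.le 1)) (hfeas _) hb0'
    linarith
end

section
/- Let N ≥ 1, B ≥ 0, V > 0, V_T ≥ 0, W ≥ 1 and T ≥ 1 with W dividing T. For each i ∈ {1,…,N} let Q_i, a_i, b_i, a*_i, b*_i satisfy Q_i(0) = 0, Q_i(t+1) = max(Q_i(t) + a_i(t) − b_i(t), 0), and 0 ≤ a_i(t), b_i(t), a*_i(t), b*_i(t) ≤ B for t ∈ {0,…,T−1}. Let U, U* : {0,…,T−1} → ℝ, suppose the Drift-plus-Penalty property holds at every slot t < T (Σ_{i} Q_i(t)(b_i(t) − a_i(t)) + V·U(t) ≥ Σ_{i} Q_i(t)(b*_i(t) − a*_i(t)) + V·U*(t)), and suppose the comparator satisfies the V_T-window constraint Σ_{τ=t}^{t+W−1} (a*_i(τ) − b*_i(τ)) ≤ V_T for every i and every t that is a multiple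 of W with t + W ≤ T. Then, writing M = max_{0 ≤ t ≤ T} Σ_{i=1}^N Q_i(t), the utility regret satisfies Σ_{t=0}^{T−1} U*(t) − Σ_{t=0}^{T−1} U(t) ≤ (V_T · T · M)/(W · V) + 7·N·B²·W·T / V. -/
open Finset

/-!
Summing the Drift-plus-Penalty inequality over all slots bounds `V` times the regret by the
policy's drift term `∑ₜ ∑ᵢ Qᵢ(t)(bᵢ(t) - aᵢ(t))` plus the comparator's term
`∑ₜ ∑ᵢ Qᵢ(t)(a*ᵢ(t) - b*ᵢ(t))`. Since `Q(t+1)² ≤ Q(t)² - 2Q(t)(b(t) - a(t)) + B²`, the drift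
term telescopes to at most `NB²T/2`. For the comparator term, cut time into the `T/W` windows of
length `W`. A queue moves by at most `B` per slot, so inside a window it stays within `BW` of its
value at the window's start; freezing it there costs at most `W²B²` per queue, and the frozen sum
is at most `V_T·Qᵢ(start) ≤ V_T·M` summed over queues, by the window constraint.
-/

theorem sum_mul_le_of_abs_sub_mul_le {α : Type*} {s : Finset α} {q c : α → ℝ} {t₀ : α} {S D : ℝ}
    (hq : 0 ≤ q t₀) (hS : ∑ t ∈ s, c t ≤ S) (hD : ∀ t ∈ s, |q t - q t₀| * |c t| ≤ D) :
    ∑ t ∈ s, q t * c t ≤ q t₀ * S + #s * D :=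
  calc ∑ t ∈ s, q t * c t = q t₀ * ∑ t ∈ s, c t + ∑ t ∈ s, (q t - q t₀) * c t := by
        rw [mul_sum, ← sum_add_distrib]; congr! 1; ring
    _ ≤ q t₀ * S + ∑ _t ∈ s, D := by
        gcongr with t ht
        exact (le_abs_self _).trans ((abs_mul _ _).trans_le (hD t ht))
    _ = q t₀ * S + #s * D := by rw [sum_const, nsmul_eq_mul]

theorem sum_range_mul_le_nsmul_of_sum_Ico_le {M : Type*} [AddCommMonoid M] [PartialOrder M]
    [IsOrderedAddMonoid M] {f : ℕ → M} {W K : ℕ} {C : M}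
    (h : ∀ k < K, ∑ t ∈ Ico (W * k) (W * k + W), f t ≤ C) :
    ∑ t ∈ range (W * K), f t ≤ K • C := by
  induction K with
  | zero => simp
  | succ K ih =>
    rw [Nat.mul_succ, ← sum_range_add_sum_Ico f (Nat.le_add_right _ _), succ_nsmul]
    exact add_le_add (ih fun k hk => h k (by omega)) (h K (by omega))

section Queue

variable {q a b : ℕ → ℝ} {B : ℝ}

theorem queue_nonneg_s13 (hq0 : 0 ≤ q 0) (hrec : ∀ t, q (t + 1) = max (q t + a t - b t) 0) (t : ℕ) :
    0 ≤ q t := by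
  cases t with
  | zero => exact hq0
  | succ t => rw [hrec]; exact le_max_right _ _

theorem queue_sq_succ_le {t : ℕ} (hrec : q (t + 1) = max (q t + a t - b t) 0)
    (ha : a t ∈ Set.Icc 0 B) (hb : b t ∈ Set.Icc 0 B) :
    q (t + 1) ^ 2 ≤ q t ^ 2 - 2 * (q t * (b t - a t)) + B ^ 2 := by
  have hsq : q (t + 1) ^ 2 ≤ (q t + a t - b t) ^ 2 := by
    rw [hrec]
    rcases le_total 0 (q t + a t - b t) with h | h
    · rw [max_eq_left h]
    · rw [max_eq_right h, sq, zero_mul]; exact sq_nonneg _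
  have hab : (a t - b t) ^ 2 ≤ B ^ 2 :=
    sq_le_sq.2 ((abs_sub_le_of_nonneg_of_le ha.1 ha.2 hb.1 hb.2).trans (le_abs_self B))
  nlinarith

theorem queue_sum_mul_sub_le {n : ℕ} (hq0 : q 0 = 0)
    (hrec : ∀ t, q (t + 1) = max (q t + a t - b t) 0)
    (hab : ∀ t < n, a t ∈ Set.Icc 0 B ∧ b t ∈ Set.Icc 0 B) :
    ∑ t ∈ range n, q t * (b t - a t) ≤ n * B ^ 2 / 2 := by
  have hstep : ∀ t ∈ range n, q t * (b t - a t) ≤ (q t ^ 2 - q (t + 1) ^ 2 + B ^ 2) / 2 := by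
    intro t ht
    obtain ⟨ha, hb⟩ := hab t (mem_range.1 ht)
    linarith [queue_sq_succ_le (hrec t) ha hb]
  calc ∑ t ∈ range n, q t * (b t - a t)
      ≤ ∑ t ∈ range n, (q t ^ 2 - q (t + 1) ^ 2 + B ^ 2) / 2 := sum_le_sum hstep
    _ = (q 0 ^ 2 - q n ^ 2 + n * B ^ 2) / 2 := by
      rw [← sum_div, sum_add_distrib, sum_range_sub', sum_const, card_range, nsmul_eq_mul]
    _ ≤ n * B ^ 2 / 2 := by rw [hq0]; linarith [sq_nonneg (q n)]

theorem queue_abs_sub_succ_le {t : ℕ} (hq : 0 ≤ q t) (hrec : q (t + 1) = max (q t + a t - b t) 0)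
    (ha : a t ∈ Set.Icc 0 B) (hb : b t ∈ Set.Icc 0 B) : |q (t + 1) - q t| ≤ B :=
  calc |q (t + 1) - q t| = |max (q t + a t - b t) 0 - max (q t) 0| := by rw [hrec, max_eq_left hq]
    _ ≤ |q t + a t - b t - q t| := abs_max_sub_max_le_abs _ _ _
    _ = |a t - b t| := by ring_nf
    _ ≤ B := abs_sub_le_of_nonneg_of_le ha.1 ha.2 hb.1 hb.2

theorem queue_abs_sub_le_of_le {s t : ℕ} (hq0 : 0 ≤ q 0)
    (hrec : ∀ t, q (t + 1) = max (q t + a t - b t) 0) (hst : s ≤ t)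
    (hab : ∀ k, s ≤ k → k < t → a k ∈ Set.Icc 0 B ∧ b k ∈ Set.Icc 0 B) :
    |q t - q s| ≤ (t - s : ℕ) * B := by
  have := dist_le_Ico_sum_of_dist_le (f := q) (d := fun _ => B) hst fun hsk hkt => by
    rw [dist_comm, Real.dist_eq]
    exact queue_abs_sub_succ_le (queue_nonneg_s13 hq0 hrec _) (hrec _) (hab _ hsk hkt).1
      (hab _ hsk hkt).2
  simpa [Real.dist_eq, abs_sub_comm] using this

theorem queue_sum_Ico_mul_le {c : ℕ → ℝ} {S : ℝ} {s W : ℕ} (hq0 : 0 ≤ q 0)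
    (hrec : ∀ t, q (t + 1) = max (q t + a t - b t) 0)
    (hab : ∀ t ∈ Ico s (s + W), a t ∈ Set.Icc 0 B ∧ b t ∈ Set.Icc 0 B)
    (hc : ∀ t ∈ Ico s (s + W), |c t| ≤ B) (hS : ∑ t ∈ Ico s (s + W), c t ≤ S) :
    ∑ t ∈ Ico s (s + W), q t * c t ≤ q s * S + W * (W * B ^ 2) := by
  have hD : ∀ t ∈ Ico s (s + W), |q t - q s| * |c t| ≤ W * B ^ 2 := by
    intro t ht
    obtain ⟨hst, hts⟩ := mem_Ico.1 ht
    have hmove := queue_abs_sub_le_of_le hq0 hrec hst fun k hsk hkt =>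
      hab k (mem_Ico.2 ⟨hsk, hkt.trans hts⟩)
    have hlen : ((t - s : ℕ) : ℝ) ≤ W := by exact_mod_cast (by omega : t - s ≤ W)
    calc |q t - q s| * |c t| ≤ (t - s : ℕ) * B * B :=
          mul_le_mul hmove (hc t ht) (abs_nonneg _) ((abs_nonneg _).trans hmove)
      _ = (t - s : ℕ) * B ^ 2 := by ring
      _ ≤ W * B ^ 2 := by gcongr
  simpa using sum_mul_le_of_abs_sub_mul_le (queue_nonneg_s13 hq0 hrec s) hS hD

end Queue

section QueueNetwork

variable {ι : Type*} [Fintype ι] {Q a b : ι → ℕ → ℝ} {B : ℝ}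

theorem sum_range_sum_queue_mul_sub_le {n : ℕ} (hQ0 : ∀ i, Q i 0 = 0)
    (hrec : ∀ i t, Q i (t + 1) = max (Q i t + a i t - b i t) 0)
    (hab : ∀ i, ∀ t < n, a i t ∈ Set.Icc 0 B ∧ b i t ∈ Set.Icc 0 B) :
    ∑ t ∈ range n, ∑ i, Q i t * (b i t - a i t) ≤ Fintype.card ι * (n * B ^ 2 / 2) := by
  rw [sum_comm]
  simpa using sum_le_sum (s := univ) fun i _ => queue_sum_mul_sub_le (hQ0 i) (hrec i) (hab i)

theorem sum_Ico_sum_queue_mul_le {c : ι → ℕ → ℝ} {S : ℝ} {s W : ℕ} (hQ0 : ∀ i, 0 ≤ Q i 0)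
    (hrec : ∀ i t, Q i (t + 1) = max (Q i t + a i t - b i t) 0)
    (hab : ∀ i, ∀ t ∈ Ico s (s + W), a i t ∈ Set.Icc 0 B ∧ b i t ∈ Set.Icc 0 B)
    (hc : ∀ i, ∀ t ∈ Ico s (s + W), |c i t| ≤ B) (hS : ∀ i, ∑ t ∈ Ico s (s + W), c i t ≤ S) :
    ∑ t ∈ Ico s (s + W), ∑ i, Q i t * c i t ≤
      S * ∑ i, Q i s + Fintype.card ι * (W * (W * B ^ 2)) := by
  rw [sum_comm]
  calc _ ≤ ∑ i, (Q i s * S + W * (W * B ^ 2)) := sum_le_sum fun i _ =>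
        queue_sum_Ico_mul_le (hQ0 i) (hrec i) (hab i) (hc i) (hS i)
    _ = S * ∑ i, Q i s + Fintype.card ι * (W * (W * B ^ 2)) := by
        simp [sum_add_distrib, mul_sum, mul_comm]

end QueueNetwork

theorem DPP_regret_bound_VT_constrained_general (N : ℕ) (B : ℝ)
    (V : ℝ) (hV : 0 < V) (VT : ℝ) (hVT : 0 ≤ VT)
    (W T : ℕ) (hW : 1 ≤ W) (hWT : W ∣ T)
    (Q a b astar bstar : Fin N → ℕ → ℝ) (U Ustar : ℕ → ℝ)
    (hQ0 : ∀ i, Q i 0 = 0)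
    (hrec : ∀ i t, Q i (t + 1) = max (Q i t + a i t - b i t) 0)
    (hbnd : ∀ i, ∀ t < T, (0 ≤ a i t ∧ a i t ≤ B) ∧ (0 ≤ b i t ∧ b i t ≤ B) ∧
      (0 ≤ astar i t ∧ astar i t ≤ B) ∧ (0 ≤ bstar i t ∧ bstar i t ≤ B))
    (hDPP : ∀ t < T, (∑ i, Q i t * (b i t - a i t)) + V * U t ≥
      (∑ i, Q i t * (bstar i t - astar i t)) + V * Ustar t)
    (hwindow : ∀ t : ℕ, W ∣ t → t + W ≤ T → ∀ i,
      (∑ τ ∈ Finset.Ico t (t + W), (astar i τ - bstar i τ)) ≤ VT)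
    (M : ℝ)
    (hM : M = (Finset.range (T + 1)).sup' Finset.nonempty_range_add_one (fun t => ∑ i, Q i t)) :
    (∑ t ∈ Finset.range T, Ustar t) - (∑ t ∈ Finset.range T, U t) ≤
      VT * (T : ℝ) * M / ((W : ℝ) * V) + 7 * (N : ℝ) * B ^ 2 * (W : ℝ) * (T : ℝ) / V := by
  obtain ⟨K, rfl⟩ := hWT
  have hdrift := sum_range_sum_queue_mul_sub_le hQ0 hrec fun i t ht =>
    ⟨(hbnd i t ht).1, (hbnd i t ht).2.1⟩
  have hwin : ∀ k < K, ∑ t ∈ Ico (W * k) (W * k + W), ∑ i, Q i t * (astar i t - bstar i t) ≤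
      VT * M + N * (W * (W * B ^ 2)) := by
    intro k hk
    have hblock : W * k + W ≤ W * K := by rw [← Nat.mul_succ]; exact Nat.mul_le_mul_left W hk
    have hQM : ∑ i, Q i (W * k) ≤ M := hM ▸ le_sup' (fun t => ∑ i, Q i t) (mem_range.2 (by omega))
    have hmem : ∀ t ∈ Ico (W * k) (W * k + W), t < W * K :=
      fun t ht => (mem_Ico.1 ht).2.trans_le hblock
    have hsum := sum_Ico_sum_queue_mul_le (fun i => (hQ0 i).ge) hrec
      (fun i t ht => ⟨(hbnd i t (hmem t ht)).1, (hbnd i t (hmem t ht)).2.1⟩)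
      (fun i t ht => have h := (hbnd i t (hmem t ht)).2.2
        abs_sub_le_of_nonneg_of_le h.1.1 h.1.2 h.2.1 h.2.2)
      (hwindow _ (dvd_mul_right W k) hblock)
    simpa using hsum.trans (add_le_add_left (mul_le_mul_of_nonneg_left hQM hVT) _)
  have hcomp := sum_range_mul_le_nsmul_of_sum_Ico_le hwin
  have hregret : V * (∑ t ∈ range (W * K), Ustar t - ∑ t ∈ range (W * K), U t) ≤
      ∑ t ∈ range (W * K), ∑ i, Q i t * (b i t - a i t) +
        ∑ t ∈ range (W * K), ∑ i, Q i t * (astar i t - bstar i t) := by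
    rw [mul_sub, mul_sum, mul_sum, ← sum_sub_distrib, ← sum_add_distrib]
    refine sum_le_sum fun t ht => ?_
    have := hDPP t (mem_range.1 ht)
    simp only [mul_sub, sum_sub_distrib] at this ⊢
    linarith
  have hW' : (1 : ℝ) ≤ W := by exact_mod_cast hW
  have hfirst : VT * ((W * K : ℕ) : ℝ) * M / (W * V) = VT * K * M / V := by
    push_cast; field_simp
  rw [hfirst, ← add_div, le_div_iff₀' hV]
  simp only [Fintype.card_fin, nsmul_eq_mul, Nat.cast_mul] at hdrift hcomp ⊢
  linarith [mul_nonneg (by positivity : (0 : ℝ) ≤ N * K * B ^ 2 * W)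
    (by linarith : (0 : ℝ) ≤ 6 * W - 1 / 2)]

/-- Utility-regret inequality for the Drift-plus-Penalty algorithm under the
`V_T`-constrained adversary model (Theorem `thm:max-general`, before optimizing the
window size `W`): writing `M` for the peak total queue length, the utility regret is
at most `V_T·T·M/(W·V) + 7NB²WT/V`. -/
theorem DPP_regret_bound_VT_constrained (N : ℕ) (hN : 1 ≤ N) (B : ℝ) (hB : 0 ≤ B)
    (V : ℝ) (hV : 0 < V) (VT : ℝ) (hVT : 0 ≤ VT)
    (W T : ℕ) (hW : 1 ≤ W) (hT : 1 ≤ T) (hWT : W ∣ T)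
    (Q a b astar bstar : Fin N → ℕ → ℝ) (U Ustar : ℕ → ℝ)
    (hQ0 : ∀ i, Q i 0 = 0)
    (hrec : ∀ i t, Q i (t + 1) = max (Q i t + a i t - b i t) 0)
    (hbnd : ∀ i, ∀ t < T, (0 ≤ a i t ∧ a i t ≤ B) ∧ (0 ≤ b i t ∧ b i t ≤ B) ∧
      (0 ≤ astar i t ∧ astar i t ≤ B) ∧ (0 ≤ bstar i t ∧ bstar i t ≤ B))
    (hDPP : ∀ t < T, (∑ i, Q i t * (b i t - a i t)) + V * U t ≥
      (∑ i, Q i t * (bstar i t - astar i t)) + V * Ustar t)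
    (hwindow : ∀ t : ℕ, W ∣ t → t + W ≤ T → ∀ i,
      (∑ τ ∈ Finset.Ico t (t + W), (astar i τ - bstar i τ)) ≤ VT)
    (M : ℝ)
    (hM : M = (Finset.range (T + 1)).sup' Finset.nonempty_range_add_one (fun t => ∑ i, Q i t)) :
    (∑ t ∈ Finset.range T, Ustar t) - (∑ t ∈ Finset.range T, U t) ≤
      VT * (T : ℝ) * M / ((W : ℝ) * V) + 7 * (N : ℝ) * B ^ 2 * (W : ℝ) * (T : ℝ) / V :=
  DPP_regret_bound_VT_constrained_general N B V hV VT hVT W T hW hWT Q a b astar bstar U Ustar hQ0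
    hrec hbnd hDPP hwindow M hM
end
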